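/- If a finite simple graph G has a perfect matching, then the containability number of G is at most the number of vertices of G, i.e., ξ(G) ≤ n. -/

import Mathlib

open SimpleGraph

universe u
variable {V : Type u}

/-- Cop strategy in the Containment game: cops occupy edges, move to adjacent edges or pass. -/
structure ContCopStrat (G : SimpleGraph V) (k : ℕ) where
  init : Fin k → Sym2 V
  init_mem : ∀ i, init i ∈ G.edgeSet
  move : (Fin k → Sym2 V) → V → (Fin k → Sym2 V)
  move_mem : ∀ c r i, move c r i ∈ G.edgeSet
  move_adj : ∀ c r i, move c r i = c i ∨ ∃ x : V, x ∈ c i ∧ x ∈ move c r i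

/-- Robber strategy in the Containment game: the robber occupies vertices, may pass or move
along an edge not occupied by a cop. -/
structure ContRobStrat (G : SimpleGraph V) (k : ℕ) where
  init : (Fin k → Sym2 V) → V
  move : (Fin k → Sym2 V) → V → V
  move_ok : ∀ c v, move c v = v ∨
    (G.Adj v (move c v) ∧ ∀ i, c i ≠ s(v, move c v))

/-- The play: cops place first, the robber responds; each round cops move, then the robber. -/
def contPlay {G : SimpleGraph V} {k : ℕ} (S : ContCopStrat G k) (R : ContRobStrat G k) :
    ℕ → (Fin k → Sym2 V) × V
  | 0 => (S.init, R.init S.init)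
  | n + 1 =>
    let p := contPlay S R n
    let c' := S.move p.1 p.2
    (c', R.move c' p.2)

/-- The robber at `v` is contained: every incident edge is occupied by a cop. -/
def Contained {k : ℕ} (G : SimpleGraph V) (c : Fin k → Sym2 V) (v : V) : Prop :=
  ∀ w, G.Adj v w → ∃ i, c i = s(v, w)

/-- `k` cops have a winning strategy in the Containment game on `G`. -/
def ContCopsWin (G : SimpleGraph V) (k : ℕ) : Prop :=
  ∃ S : ContCopStrat G k, ∀ R : ContRobStrat G k, ∃ n,
    Contained G (contPlay S R n).1 (contPlay S R n).2 ∨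
    Contained G (S.move (contPlay S R n).1 (contPlay S R n).2) (contPlay S R n).2

/-- The containability number ξ(G). -/
noncomputable def containNum (G : SimpleGraph V) : ℕ := sInf {k | ContCopsWin G k}

/-!
Put one cop on an edge at each vertex `v`, e.g. the matching edge at `v`. Whatever vertex `r` the
robber picks, the cop standing at a neighbour `w` of `r` can move onto the edge `rw`, since that
edge shares the endpoint `w` with its own. So after the first cop move all edges at `r` are
occupied.
-/

namespace ContCopStrat

variable {G : SimpleGraph V} {k : ℕ} {g : Fin k → V} {m : V → V} {hm : ∀ v, G.Adj v (m v)}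

open Classical in
noncomputable def guard (G : SimpleGraph V) (g : Fin k → V) (m : V → V)
    (hm : ∀ v, G.Adj v (m v)) : ContCopStrat G k where
  init i := s(g i, m (g i))
  init_mem i := hm (g i)
  move c r i :=
    if G.Adj r (g i) ∧ g i ∈ c i then s(r, g i)
    -- any edge at an endpoint of `c i` will do: `move` must be legal from every position
    else s((c i).out.1, m (c i).out.1)
  move_mem c r i := by
    split_ifs with h
    exacts [h.1, hm _]
  move_adj c r i := Or.inr <| by
    split_ifs with h
    exacts [⟨g i, h.2, Sym2.mem_mk_right _ _⟩, ⟨_, Sym2.out_fst_mem _, Sym2.mem_mk_left _ _⟩]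

theorem guard_init_mem (i : Fin k) : g i ∈ (guard G g m hm).init i :=
  Sym2.mem_mk_left _ _

theorem contained_guard_move (hg : Function.Surjective g) {c : Fin k → Sym2 V}
    (hc : ∀ i, g i ∈ c i) (r : V) : Contained G ((guard G g m hm).move c r) r := by
  intro w hw
  obtain ⟨i, rfl⟩ := hg w
  exact ⟨i, if_pos ⟨hw, hc i⟩⟩

end ContCopStrat

theorem contCopsWin_of_surjective {G : SimpleGraph V} (h : ∀ v, ∃ w, G.Adj v w) {k : ℕ}
    {g : Fin k → V} (hg : Function.Surjective g) : ContCopsWin G k := by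
  choose m hm using h
  refine ⟨.guard G g m hm, fun _ => ⟨0, Or.inr ?_⟩⟩
  exact ContCopStrat.contained_guard_move hg (c := (ContCopStrat.guard G g m hm).init)
    ContCopStrat.guard_init_mem _

/-- If a finite simple graph `G` has a perfect matching, then ξ(G) ≤ n. -/
theorem containNum_le_card_of_perfectMatching {V : Type u} [Fintype V]
    (G : SimpleGraph V) (M : G.Subgraph) (hM : M.IsPerfectMatching) :
    containNum G ≤ Fintype.card V := by
  have hadj : ∀ v, ∃ w, G.Adj v w := fun v =>
    (hM.1 (hM.2 v)).exists.imp fun _ => M.adj_sub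
  exact Nat.sInf_le (contCopsWin_of_surjective hadj (Fintype.equivFin V).symm.surjective)
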